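/- If a rotation maps a ray bijectively onto itself, then it fixes that ray pointwise: for u ≠ 0 and d ∈ D, d(ℝ≥0 u) = ℝ≥0 u implies d u = u. -/

import Mathlib

/-- The ray (half-line) spanned by `v`: all nonnegative multiples of `v`. -/
def Ray' {V : Type*} [AddCommGroup V] [Module ℝ V] (v : V) : Set V :=
  {x | ∃ c : ℝ, 0 ≤ c ∧ x = c • v}

/-- The half-plane `ℝ v + ℝ≥0 w`. -/
def HalfPlane {V : Type*} [AddCommGroup V] [Module ℝ V] (v w : V) : Set V :=
  {x | ∃ a b : ℝ, 0 ≤ b ∧ x = a • v + b • w}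

/-- `D` is a rotation group: for any two pairs of (half-plane, ray on its boundary)
there is exactly one element of `D` mapping the first pair to the second. -/
def IsRotationGroup {V : Type*} [AddCommGroup V] [Module ℝ V]
    (D : Subgroup (V ≃ₗ[ℝ] V)) : Prop :=
  ∀ v w v' w' : V, LinearIndependent ℝ ![v, w] → LinearIndependent ℝ ![v', w'] →
    ∃! d : V ≃ₗ[ℝ] V, d ∈ D ∧
      (d : V ≃ₗ[ℝ] V) '' HalfPlane v w = HalfPlane v' w' ∧
      (d : V ≃ₗ[ℝ] V) '' Ray' v = Ray' v'

/-- `w ⊥ v` : some rotation sends `w` to `-w` and fixes `v`. -/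
def Perp {V : Type*} [AddCommGroup V] [Module ℝ V]
    (D : Subgroup (V ≃ₗ[ℝ] V)) (w v : V) : Prop :=
  ∃ r ∈ D, r w = -w ∧ r v = v

/-!
An element of `D` that preserves a half-plane together with a ray on its boundary is the identity.
So if `e ∈ D` maps the line `ℝ u` to itself, `e u = c • u`, and some half-plane bounded by `ℝ u` is
`e`-invariant, then `e ∘ e` fixes that half-plane and the ray `ℝ≥0 u`, whence `e ∘ e = 1` and
`c ^ 2 = 1`. Such a half-plane exists whenever the map induced by `e` on the plane `V ⧸ ℝ u` has
negative determinant, because its characteristic polynomial then has a positive root.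

The element `ψ ∈ D` sending `(H(u, w), ℝ≥0 u)` to `(H(-u, w), ℝ≥0 (-u))` is an involution with
`ψ u = -u` inducing a reflection on `V ⧸ ℝ u`. Since `d` induces an invertible map there, `d` or
`d ψ` induces one with negative determinant, and either way the factor `t` in `d u = t • u`
satisfies `t ^ 2 = 1`.
-/

open Module

section RaysAndHalfPlanes

variable {V : Type*} [AddCommGroup V] [Module ℝ V]

lemma self_mem_ray (v : V) : v ∈ Ray' v :=
  ⟨1, zero_le_one, (one_smul ℝ v).symm⟩

lemma right_mem_halfPlane (v w : V) : w ∈ HalfPlane v w :=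
  ⟨0, 1, zero_le_one, by simp⟩

lemma image_halfPlane (e : V ≃ₗ[ℝ] V) (v w : V) :
    e '' HalfPlane v w = HalfPlane (e v) (e w) := by
  ext x
  constructor
  · rintro ⟨y, ⟨a, b, hb, rfl⟩, rfl⟩
    exact ⟨a, b, hb, by simp⟩
  · rintro ⟨a, b, hb, rfl⟩
    exact ⟨a • v + b • w, ⟨a, b, hb, rfl⟩, by simp⟩

lemma image_ray (e : V ≃ₗ[ℝ] V) (v : V) : e '' Ray' v = Ray' (e v) := by
  ext x
  constructor
  · rintro ⟨y, ⟨c, hc, rfl⟩, rfl⟩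
    exact ⟨c, hc, by simp⟩
  · rintro ⟨c, hc, rfl⟩
    exact ⟨c • v, ⟨c, hc, rfl⟩, by simp⟩

lemma halfPlane_smul_left {c : ℝ} (hc : c ≠ 0) (v w : V) :
    HalfPlane (c • v) w = HalfPlane v w := by
  ext x
  constructor
  · rintro ⟨a, b, hb, rfl⟩
    exact ⟨a * c, b, hb, by rw [smul_smul]⟩
  · rintro ⟨a, b, hb, rfl⟩
    exact ⟨a / c, b, hb, by rw [smul_smul, div_mul_cancel₀ _ hc]⟩

lemma halfPlane_neg_left (v w : V) : HalfPlane (-v) w = HalfPlane v w := by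
  rw [← neg_one_smul ℝ v, halfPlane_smul_left (by norm_num)]

lemma halfPlane_smul_add_smul {t : ℝ} (ht : 0 < t) (μ : ℝ) (v w : V) :
    HalfPlane v (t • w + μ • v) = HalfPlane v w := by
  ext x
  constructor
  · rintro ⟨a, b, hb, rfl⟩
    exact ⟨a + b * μ, b * t, by positivity, by module⟩
  · rintro ⟨a, b, hb, rfl⟩
    refine ⟨a - b / t * μ, b / t, by positivity, ?_⟩
    match_scalars
    · ring
    · field_simp

lemma ray_smul {t : ℝ} (ht : 0 < t) (v : V) : Ray' (t • v) = Ray' v := by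
  ext x
  constructor
  · rintro ⟨c, hc, rfl⟩
    exact ⟨c * t, by positivity, by rw [smul_smul]⟩
  · rintro ⟨c, hc, rfl⟩
    exact ⟨c / t, by positivity, by rw [smul_smul, div_mul_cancel₀ _ ht.ne']⟩

end RaysAndHalfPlanes

theorem Polynomial.Monic.exists_pos_isRoot {P : Polynomial ℝ} (hP : P.Monic) (h0 : P.eval 0 < 0) :
    ∃ x > 0, P.IsRoot x := by
  have hdeg : 0 < P.degree := by
    refine Polynomial.natDegree_pos_iff_degree_pos.1 (Nat.pos_of_ne_zero fun h ↦ ?_)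
    rw [hP.natDegree_eq_zero.1 h, Polynomial.eval_one] at h0
    exact absurd h0 (by norm_num)
  have hlim := P.tendsto_atTop_of_leadingCoeff_nonneg hdeg (hP.leadingCoeff ▸ zero_le_one)
  obtain ⟨b, hb, hb0⟩ := ((hlim.eventually_gt_atTop 0).and (Filter.eventually_ge_atTop 0)).exists
  obtain ⟨x, ⟨hx0, -⟩, hx⟩ := intermediate_value_Icc hb0 P.continuous.continuousOn
    ⟨h0.le, hb.le⟩
  exact ⟨x, hx0.lt_of_ne (by rintro rfl; exact h0.ne hx), hx⟩

theorem Module.End.exists_pos_hasEigenvalue_of_det_neg {M : Type*} [AddCommGroup M] [Module ℝ M]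
    [FiniteDimensional ℝ M] (hM : Even (finrank ℝ M)) {f : Module.End ℝ M}
    (hf : LinearMap.det f < 0) : ∃ μ > 0, f.HasEigenvalue μ := by
  rw [LinearMap.det_eq_sign_charpoly_coeff, hM.neg_one_pow, one_mul,
    Polynomial.coeff_zero_eq_eval_zero] at hf
  obtain ⟨μ, hμ, hroot⟩ := f.charpoly_monic.exists_pos_isRoot hf
  exact ⟨μ, hμ, (f.hasEigenvalue_iff_isRoot_charpoly μ).2 hroot⟩

theorem LinearMap.det_eq_neg_one_of_mul_self_eq_one {K M : Type*} [Field K] [NeZero (2 : K)]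
    [AddCommGroup M] [Module K M] (hM : finrank K M = 2) {f : Module.End K M} (hf : f * f = 1)
    (h1 : f ≠ 1) (h2 : f ≠ -1) : LinearMap.det f = -1 := by
  have hff (x : M) : f (f x) = x := LinearMap.congr_fun hf x
  obtain ⟨x, hx⟩ : ∃ x, f x ≠ -x := by
    by_contra! h
    exact h2 (LinearMap.ext h)
  obtain ⟨y, hy⟩ : ∃ y, f y ≠ y := by
    by_contra! h
    exact h1 (LinearMap.ext h)
  let μ : Fin 2 → K := ![1, -1]
  let v : Fin 2 → M := ![f x + x, f y - y]
  have hv : ∀ i, f.HasEigenvector (μ i) (v i) := by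
    intro i
    refine Module.End.hasEigenvector_iff.2 ⟨Module.End.mem_eigenspace_iff.2 ?_, ?_⟩ <;>
      fin_cases i
    · simp [v, μ, hff, add_comm]
    · simp [v, μ, hff]
    · simpa [v, add_eq_zero_iff_eq_neg] using hx
    · simpa [v, sub_eq_zero] using hy
  have hμ : Function.Injective μ := by
    have hne : (1 : K) ≠ -1 := fun h ↦ (two_ne_zero : (2 : K) ≠ 0) (by linear_combination h)
    intro i j hij
    fin_cases i <;> fin_cases j <;> simp_all [μ]
  let b := basisOfLinearIndependentOfCardEqFinrank (f.eigenvectors_linearIndependent' μ hμ v hv)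
    (by simp [hM])
  have hb (i : Fin 2) : f (b i) = μ i • b i := by
    simpa [b] using (hv i).apply_eq_smul
  have hmat : LinearMap.toMatrix b b f = !![1, 0; 0, -1] := by
    ext i j
    fin_cases i <;> fin_cases j <;> simp [LinearMap.toMatrix_apply, hb, μ]
  rw [← LinearMap.det_toMatrix b, hmat, Matrix.det_fin_two_of]
  ring

theorem Submodule.span_singleton_le_comap_of_apply_eq_smul {R M : Type*} [CommSemiring R]
    [AddCommMonoid M] [Module R M] {f : M →ₗ[R] M} {u : M} {c : R} (h : f u = c • u) :
    R ∙ u ≤ (R ∙ u).comap f := by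
  rw [Submodule.span_singleton_le_iff_mem, Submodule.mem_comap, h]
  exact Submodule.smul_mem _ c (Submodule.mem_span_singleton_self u)

theorem Submodule.mapQ_mul {R M : Type*} [CommRing R] [AddCommGroup M] [Module R M]
    (p : Submodule R M) {f g : Module.End R M} (hf : p ≤ p.comap f) (hg : p ≤ p.comap g)
    (hfg : p ≤ p.comap (f * g)) : p.mapQ p (f * g) hfg = p.mapQ p f hf * p.mapQ p g hg :=
  p.mapQ_comp p p g f hg hf hfg

theorem LinearMap.det_mapQ_ne_zero {K V : Type*} [Field K] [AddCommGroup V] [Module K V]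
    [FiniteDimensional K V] (e : V ≃ₗ[K] V) (p : Submodule K V) (h : p ≤ p.comap (e : V →ₗ[K] V)) :
    LinearMap.det (p.mapQ p (e : V →ₗ[K] V) h) ≠ 0 :=
  right_ne_zero_of_mul (LinearMap.det_eq_det_mul_det p _ h ▸ e.isUnit_det'.ne_zero)

theorem LinearEquiv.ne_zero_of_apply_eq_smul {K V : Type*} [Field K] [AddCommGroup V] [Module K V]
    (e : V ≃ₗ[K] V) {u : V} (hu : u ≠ 0) {c : K} (h : e u = c • u) : c ≠ 0 := by
  rintro rfl
  exact hu (e.map_eq_zero_iff.1 (by rw [h, zero_smul]))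

theorem LinearEquiv.sq_eq_one_of_mul_self_eq_one {K V : Type*} [Field K] [AddCommGroup V]
    [Module K V] {e : V ≃ₗ[K] V} (he : e * e = 1) {u : V} (hu : u ≠ 0) {c : K}
    (h : e u = c • u) : c ^ 2 = 1 := by
  refine smul_left_injective K hu ?_
  have := congr($he u)
  simp only [LinearEquiv.mul_apply, h, map_smul, smul_smul] at this
  simpa [sq] using this

theorem linearIndependent_pair_of_mkQ_ne_zero {K V : Type*} [Field K] [AddCommGroup V]
    [Module K V] {u y : V} (hu : u ≠ 0) (hy : (K ∙ u).mkQ y ≠ 0) :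
    LinearIndependent K ![u, y] := by
  refine (LinearIndependent.pair_iff' hu).2 fun a ha ↦ hy ?_
  rw [← ha, Submodule.mkQ_apply, Submodule.Quotient.mk_eq_zero]
  exact Submodule.smul_mem _ a (Submodule.mem_span_singleton_self u)

namespace IsRotationGroup

variable {V : Type*} [AddCommGroup V] [Module ℝ V] {D : Subgroup (V ≃ₗ[ℝ] V)} {e : V ≃ₗ[ℝ] V}

theorem eq_one_of_image_eq (hD : IsRotationGroup D) (he : e ∈ D) {v w : V}
    (hvw : LinearIndependent ℝ ![v, w]) (hH : e '' HalfPlane v w = HalfPlane v w)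
    (hR : e '' Ray' v = Ray' v) : e = 1 :=
  (hD v w v w hvw hvw).unique ⟨he, hH, hR⟩ ⟨one_mem D, by simp, by simp⟩

theorem eq_one_of_apply_eq_self (hD : IsRotationGroup D) (he : e ∈ D) {v w : V}
    (hvw : LinearIndependent ℝ ![v, w]) (hv : e v = v) (hw : e w = w) : e = 1 :=
  hD.eq_one_of_image_eq he hvw (by rw [image_halfPlane, hv, hw]) (by rw [image_ray, hv])

theorem mul_self_eq_one (hD : IsRotationGroup D) (he : e ∈ D) {u y : V}
    (huy : LinearIndependent ℝ ![u, y]) {c : ℝ} (hu : e u = c • u)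
    (hH : e '' HalfPlane u y = HalfPlane u y) : e * e = 1 := by
  have hc := e.ne_zero_of_apply_eq_smul (by simpa using huy.ne_zero 0) hu
  refine hD.eq_one_of_image_eq (mul_mem he he) huy ?_ ?_
  · rw [show ⇑(e * e) = e ∘ e from rfl, Set.image_comp, hH, hH]
  · rw [image_ray, LinearEquiv.mul_apply, hu, map_smul, hu, smul_smul,
      ray_smul (mul_self_pos.2 hc)]

theorem eq_one_of_mapQ_eq_one (hD : IsRotationGroup D) (he : e ∈ D) (he2 : e * e = 1)
    {p : Submodule ℝ V} (hp : 1 < finrank ℝ (V ⧸ p)) (h : p ≤ p.comap (e : V →ₗ[ℝ] V))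
    (hQ : p.mapQ p (e : V →ₗ[ℝ] V) h = 1) : e = 1 := by
  -- `y ↦ (y + e y) / 2` picks an `e`-fixed vector in every class modulo `p`
  let avg (y : V) : V := (2⁻¹ : ℝ) • (y + e y)
  have hfix (y : V) : e (avg y) = avg y := by
    have hy : e (e y) = y := LinearEquiv.congr_fun he2 y
    simp [avg, hy, add_comm]
  have hclass (y : V) : p.mkQ (avg y) = p.mkQ y := by
    have hy : p.mkQ (e y) = p.mkQ y := LinearMap.congr_fun hQ (p.mkQ y)
    simp only [avg, map_smul, map_add, hy]
    module
  have : Nontrivial (V ⧸ p) := Module.nontrivial_of_finrank_pos (zero_lt_one.trans hp)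
  obtain ⟨x, hx⟩ := exists_ne (0 : V ⧸ p)
  obtain ⟨y, hxy⟩ := exists_linearIndependent_pair_of_one_lt_finrank hp hx
  obtain ⟨x, rfl⟩ := p.mkQ_surjective x
  obtain ⟨y, rfl⟩ := p.mkQ_surjective y
  have hcomp : p.mkQ ∘ ![avg x, avg y] = ![p.mkQ x, p.mkQ y] := by
    ext i
    fin_cases i <;> simp [hclass]
  exact hD.eq_one_of_apply_eq_self he (.of_comp p.mkQ (hcomp ▸ hxy)) (hfix x) (hfix y)

theorem sq_eq_one_of_det_mapQ_neg [FiniteDimensional ℝ V] (hD : IsRotationGroup D) (he : e ∈ D)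
    {u : V} (hu : u ≠ 0) (hQ : Even (finrank ℝ (V ⧸ ℝ ∙ u))) {c : ℝ} (heu : e u = c • u)
    (hdet : LinearMap.det ((ℝ ∙ u).mapQ (ℝ ∙ u) (e : V →ₗ[ℝ] V)
      (Submodule.span_singleton_le_comap_of_apply_eq_smul heu)) < 0) : c ^ 2 = 1 := by
  obtain ⟨μ, hμ, hμe⟩ := Module.End.exists_pos_hasEigenvalue_of_det_neg hQ hdet
  obtain ⟨y', hy'⟩ := hμe.exists_hasEigenvector
  obtain ⟨y, rfl⟩ := (ℝ ∙ u).mkQ_surjective y'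
  have huy := linearIndependent_pair_of_mkQ_ne_zero hu hy'.2
  obtain ⟨a, ha⟩ : ∃ a : ℝ, a • u = e y - μ • y := by
    rw [← Submodule.mem_span_singleton, ← Submodule.Quotient.mk_eq_zero,
      Submodule.Quotient.mk_sub, sub_eq_zero]
    exact hy'.apply_eq_smul
  have hey : e y = μ • y + a • u := by rw [ha]; abel
  refine LinearEquiv.sq_eq_one_of_mul_self_eq_one (hD.mul_self_eq_one he huy heu ?_) hu heu
  rw [image_halfPlane, heu, hey, halfPlane_smul_left (e.ne_zero_of_apply_eq_smul hu heu),
    halfPlane_smul_add_smul hμ]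

theorem exists_det_mapQ_neg (hD : IsRotationGroup D) {u : V} (hu : u ≠ 0)
    (hQ : finrank ℝ (V ⧸ ℝ ∙ u) = 2) :
    ∃ ψ ∈ D, ∃ hψ : ψ u = (-1 : ℝ) • u, LinearMap.det ((ℝ ∙ u).mapQ (ℝ ∙ u) (ψ : V →ₗ[ℝ] V)
      (Submodule.span_singleton_le_comap_of_apply_eq_smul hψ)) < 0 := by
  have : Nontrivial (V ⧸ ℝ ∙ u) := Module.nontrivial_of_finrank_pos (R := ℝ) (by omega)
  obtain ⟨w', hw'⟩ := exists_ne (0 : V ⧸ ℝ ∙ u)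
  obtain ⟨w, rfl⟩ := (ℝ ∙ u).mkQ_surjective w'
  have huw := linearIndependent_pair_of_mkQ_ne_zero hu hw'
  obtain ⟨ψ, ⟨hψD, hψH, hψR⟩, -⟩ := hD u w (-u) w huw (LinearIndependent.pair_neg_left_iff.2 huw)
  obtain ⟨s, hs, hψu⟩ : ψ u ∈ Ray' (-u) := hψR ▸ Set.mem_image_of_mem ψ (self_mem_ray u)
  rw [smul_neg, ← neg_smul] at hψu
  have hψ2 : ψ * ψ = 1 := hD.mul_self_eq_one hψD huw hψu (hψH.trans (halfPlane_neg_left u w))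
  obtain rfl : s = 1 := by
    have := LinearEquiv.sq_eq_one_of_mul_self_eq_one hψ2 hu hψu
    rwa [neg_sq, pow_eq_one_iff_of_nonneg hs two_ne_zero] at this
  refine ⟨ψ, hψD, hψu, ?_⟩
  set ψ' := (ℝ ∙ u).mapQ (ℝ ∙ u) (ψ : V →ₗ[ℝ] V)
    (Submodule.span_singleton_le_comap_of_apply_eq_smul hψu)
  have hψ'2 : ψ' * ψ' = 1 := by
    ext y
    simpa [ψ'] using congr(Submodule.Quotient.mk $(LinearEquiv.congr_fun hψ2 y))
  have hψ'1 : ψ' ≠ 1 := fun h ↦ by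
    have := hD.eq_one_of_mapQ_eq_one hψD hψ2 (by omega) _ h
    subst this
    exact hu (by simpa [eq_neg_iff_add_eq_zero, ← two_smul ℝ] using hψu)
  have hψ'neg : ψ' ≠ -1 := fun h ↦ by
    obtain ⟨a, b, hb, hψw⟩ : ψ w ∈ HalfPlane (-u) w :=
      hψH ▸ Set.mem_image_of_mem ψ (right_mem_halfPlane u w)
    have hwb : (b + 1) • (ℝ ∙ u).mkQ w = 0 := by
      have := LinearMap.congr_fun h ((ℝ ∙ u).mkQ w)
      simp only [ψ', Submodule.mkQ_apply, Submodule.mapQ_apply, LinearEquiv.coe_coe, hψw,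
        Submodule.Quotient.mk_add, Submodule.Quotient.mk_smul, Submodule.Quotient.mk_neg,
        (Submodule.Quotient.mk_eq_zero _).2 (Submodule.mem_span_singleton_self u)] at this
      rw [add_smul, one_smul]
      simpa [eq_neg_iff_add_eq_zero] using this
    rcases smul_eq_zero.1 hwb with hb' | hw
    · linarith
    · exact hw' hw
  rw [LinearMap.det_eq_neg_one_of_mul_self_eq_one hQ hψ'2 hψ'1 hψ'neg]
  norm_num

end IsRotationGroup

theorem stmt8 {V : Type*} [AddCommGroup V] [Module ℝ V]
    (hdim : Module.finrank ℝ V = 3)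
    (D : Subgroup (V ≃ₗ[ℝ] V)) (hD : IsRotationGroup D)
    (u : V) (hu : u ≠ 0) (d : V ≃ₗ[ℝ] V) (hd : d ∈ D)
    (h : (d : V ≃ₗ[ℝ] V) '' Ray' u = Ray' u) : d u = u := by
  have : FiniteDimensional ℝ V := Module.finite_of_finrank_eq_succ hdim
  have hQ : finrank ℝ (V ⧸ ℝ ∙ u) = 2 := by
    have := (ℝ ∙ u).finrank_quotient_add_finrank
    rw [finrank_span_singleton hu, hdim] at this
    omega
  obtain ⟨t, ht, hdu⟩ : d u ∈ Ray' u := h ▸ Set.mem_image_of_mem d (self_mem_ray u)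
  obtain ⟨ψ, hψD, hψu, hψdet⟩ := hD.exists_det_mapQ_neg hu hQ
  have hdψu : (d * ψ) u = (-t) • u := by
    rw [LinearEquiv.mul_apply, hψu, map_smul, hdu, smul_smul, neg_one_mul]
  have ht2 : t ^ 2 = 1 := by
    rcases (LinearMap.det_mapQ_ne_zero d _
      (Submodule.span_singleton_le_comap_of_apply_eq_smul hdu)).lt_or_gt with hneg | hpos
    · exact hD.sq_eq_one_of_det_mapQ_neg hd hu (hQ ▸ even_two) hdu hneg
    · rw [← neg_sq]
      refine hD.sq_eq_one_of_det_mapQ_neg (mul_mem hd hψD) hu (hQ ▸ even_two) hdψu ?_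
      simp only [LinearEquiv.coe_toLinearMap_mul]
      rw [Submodule.mapQ_mul _ (Submodule.span_singleton_le_comap_of_apply_eq_smul hdu)
        (Submodule.span_singleton_le_comap_of_apply_eq_smul hψu), map_mul]
      exact mul_neg_of_pos_of_neg hpos hψdet
  rw [hdu, (pow_eq_one_iff_of_nonneg ht two_ne_zero).1 ht2, one_smul]
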